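/- Fix an integer j ≥ 1 and let u : ℝ³ → ℂ be smooth, nowhere vanishing, and satisfy the submodel equations of the CP¹-like model: (1+|u|²)□u − (j+1)ū⟨∂u,∂u⟩ = 0 and ⟨∂u,∂ū⟩ = 0. Then for every integer n ∈ ℤ the complex-conjugate current J̄_μ^{(n)} = u^n ∂_μū/(1+|u|²)^{j+1}, μ = 0,1,2, is a conserved current, i.e. ∂₀J̄₀^{(n)} − ∂₁J̄₁^{(n)} − ∂₂J̄₂^{(n)} = 0 on ℝ³. -/

import Mathlib

open Complex ComplexConjugate Finset

/-- Partial derivative in direction `μ` of a complex-valued function on `ℝ³`. -/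
noncomputable def pd (μ : Fin 3) (f : (Fin 3 → ℝ) → ℂ) (x : Fin 3 → ℝ) : ℂ :=
  fderiv ℝ f x (Pi.single μ 1)

/-- The d'Alembertian `□u = ∂₀∂₀u − ∂₁∂₁u − ∂₂∂₂u` for the metric `diag(1,−1,−1)`. -/
noncomputable def dalembert (u : (Fin 3 → ℝ) → ℂ) (x : Fin 3 → ℝ) : ℂ :=
  pd 0 (pd 0 u) x - pd 1 (pd 1 u) x - pd 2 (pd 2 u) x

/-- Minkowski product of gradients `⟨∂f,∂g⟩ = ∂₀f·∂₀g − ∂₁f·∂₁g − ∂₂f·∂₂g`. -/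
noncomputable def minkGrad (f g : (Fin 3 → ℝ) → ℂ) (x : Fin 3 → ℝ) : ℂ :=
  pd 0 f x * pd 0 g x - pd 1 f x * pd 1 g x - pd 2 f x * pd 2 g x

/-- `(J₀,J₁,J₂)` is a conserved current if `∂₀J₀ − ∂₁J₁ − ∂₂J₂ = 0` identically. -/
def IsConservedCurrent (J : Fin 3 → (Fin 3 → ℝ) → ℂ) : Prop :=
  ∀ x, pd 0 (J 0) x - pd 1 (J 1) x - pd 2 (J 2) x = 0

section
variable {f g : (Fin 3 → ℝ) → ℂ} {x : Fin 3 → ℝ} {μ : Fin 3}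

lemma HasFDerivAt.pd_eq {f' : (Fin 3 → ℝ) →L[ℝ] ℂ} (hf : HasFDerivAt f f' x) : pd μ f x = f' (Pi.single μ 1) := by
  rw [pd, hf.fderiv]

lemma contDiff_pd (hf : ContDiff ℝ (⊤ : ℕ∞) f) : ContDiff ℝ (⊤ : ℕ∞) (pd μ f) := by
  unfold pd
  exact (hf.fderiv_right (by simp)).clm_apply contDiff_const

lemma contDiff_conj (hf : ContDiff ℝ (⊤ : ℕ∞) f) : ContDiff ℝ (⊤ : ℕ∞) (fun y => conj (f y)) :=
  Complex.conjCLE.toContinuousLinearMap.contDiff.comp hf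

lemma pd_conj (hf : DifferentiableAt ℝ f x) :
    pd μ (fun y => conj (f y)) x = conj (pd μ f x) := by
  have h := (Complex.conjCLE.toContinuousLinearMap.hasFDerivAt.comp x hf.hasFDerivAt)
  have h2 := h.pd_eq (μ := μ)
  simp only [Function.comp_def] at h2
  calc pd μ (fun y => conj (f y)) x = pd μ (fun y => Complex.conjCLE (f y)) x := rfl
  _ = conj (pd μ f x) := h2.trans (by simp [pd])

lemma pd_mul (hf : DifferentiableAt ℝ f x) (hg : DifferentiableAt ℝ g x) :
    pd μ (fun y => f y * g y) x = pd μ f x * g x + f x * pd μ g x := by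
  have h := (hf.hasFDerivAt.mul hg.hasFDerivAt).pd_eq (μ := μ)
  rw [show (fun y => f y * g y) = f * g from rfl, h]
  simp [pd, smul_eq_mul]
  ring

lemma pd_zpow (n : ℤ) (hf : DifferentiableAt ℝ f x) (h0 : f x ≠ 0) :
    pd μ (fun y => f y ^ n) x = (n : ℂ) * f x ^ (n - 1) * pd μ f x := by
  have h := ((hasDerivAt_zpow n (f x) (Or.inl h0)).comp_hasFDerivAt x hf.hasFDerivAt).pd_eq (μ := μ)
  simp only [Function.comp_def] at h
  rw [h]
  simp [pd, smul_eq_mul]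

lemma pd_pow (k : ℕ) (hf : DifferentiableAt ℝ f x) :
    pd μ (fun y => f y ^ k) x = (k : ℂ) * f x ^ (k - 1) * pd μ f x := by
  have h := ((hasDerivAt_pow k (f x)).comp_hasFDerivAt x hf.hasFDerivAt).pd_eq (μ := μ)
  simp only [Function.comp_def] at h
  rw [h]
  simp [pd, smul_eq_mul]

lemma pd_inv (hf : DifferentiableAt ℝ f x) (h0 : f x ≠ 0) :
    pd μ (fun y => (f y)⁻¹) x = -(pd μ f x) / (f x) ^ 2 := by
  have h := ((hasDerivAt_inv h0).comp_hasFDerivAt x hf.hasFDerivAt).pd_eq (μ := μ)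
  simp only [Function.comp_def] at h
  rw [h]
  simp [pd, smul_eq_mul]
  ring

lemma pd_const_add (c : ℂ) (hg : DifferentiableAt ℝ g x) :
    pd μ (fun y => c + g y) x = pd μ g x := by
  have h := (hg.hasFDerivAt.const_add c).pd_eq (μ := μ)
  rw [h, pd]
end

lemma one_add_mul_conj_ne (z : ℂ) : (1:ℂ) + z * conj z ≠ 0 := by
  rw [Complex.mul_conj]
  have h1 : (0:ℝ) < 1 + Complex.normSq z := by
    have := Complex.normSq_nonneg z; linarith
  intro hc
  have : ((1 + Complex.normSq z : ℝ) : ℂ) = 0 := by push_cast; linear_combination hc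
  exact absurd (Complex.ofReal_eq_zero.mp this) (ne_of_gt h1)

lemma pd_J (j : ℕ) (u : (Fin 3 → ℝ) → ℂ) (hu : ContDiff ℝ (⊤ : ℕ∞) u) (hne : ∀ y, u y ≠ 0)
    (n : ℤ) (μ : Fin 3) (x : Fin 3 → ℝ) :
    pd μ (fun y => u y ^ n * pd μ (fun z => conj (u z)) y / (1 + u y * conj (u y)) ^ (j+1)) x
    = ((n:ℂ) * u x ^ (n-1) * pd μ u x) * conj (pd μ u x) * ((1 + u x * conj (u x)) ^ (j+1))⁻¹
      + u x ^ n * conj (pd μ (pd μ u) x) * ((1 + u x * conj (u x)) ^ (j+1))⁻¹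
      + u x ^ n * conj (pd μ u x) *
        (-(((j:ℂ)+1) * (1 + u x * conj (u x)) ^ j * (pd μ u x * conj (u x) + u x * conj (pd μ u x)))
           / (((1 + u x * conj (u x)) ^ (j+1)) ^ 2)) := by
  have hud : ∀ y, DifferentiableAt ℝ u y := fun y => hu.differentiable (by simp) y
  have hBfun : pd μ (fun z => conj (u z)) = fun y => conj (pd μ u y) :=
    funext fun y => pd_conj (hud y)
  have hpuC : ContDiff ℝ (⊤ : ℕ∞) (pd μ u) := contDiff_pd hu
  have hB : ContDiff ℝ (⊤ : ℕ∞) fun y => conj (pd μ u y) := contDiff_conj hpuC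
  have hmul : ContDiff ℝ (⊤ : ℕ∞) (fun y => u y * conj (u y)) := hu.mul (contDiff_conj hu)
  have hhC : ContDiff ℝ (⊤ : ℕ∞) (fun y => (1:ℂ) + u y * conj (u y)) := contDiff_const.add hmul
  have hhne : ∀ y, (1:ℂ) + u y * conj (u y) ≠ 0 := fun y => one_add_mul_conj_ne (u y)
  have hA : DifferentiableAt ℝ (fun y => u y ^ n) x :=
    ((hasDerivAt_zpow n (u x) (Or.inl (hne x))).comp_hasFDerivAt x
      (hud x).hasFDerivAt).differentiableAt
  have hC : DifferentiableAt ℝ (fun y => ((1:ℂ) + u y * conj (u y)) ^ (j+1)) x :=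
    (hhC.differentiable (by simp) x).pow _
  simp only [div_eq_mul_inv, hBfun]
  rw [pd_mul (f := fun y => u y ^ n * conj (pd μ u y)) (g := fun y => ((1 + u y * conj (u y)) ^ (j+1))⁻¹)
        (hA.mul (hB.differentiable (by simp) x)) (hC.inv (pow_ne_zero _ (hhne x))),
      pd_mul hA (hB.differentiable (by simp) x),
      pd_zpow n (hud x) (hne x),
      pd_inv hC (pow_ne_zero _ (hhne x)),
      pd_pow (j+1) (hhC.differentiable (by simp) x),
      pd_const_add _ (hmul.differentiable (by simp) x),
      pd_mul (hud x) ((contDiff_conj hu).differentiable (by simp) x),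
      pd_conj (hud x), pd_conj (hpuC.differentiable (by simp) x)]
  push_cast [Nat.add_sub_cancel]
  ring


/-- For a nowhere-vanishing solution of the submodel of the `CP¹`-like model, the
conjugate current `J̄_μ^{(n)} = u^n ∂_μū/(1+|u|²)^{j+1}` is conserved for every `n : ℤ`. -/
theorem cp1_like_submodel_Jn_bar_conserved (j : ℕ) (hj : 1 ≤ j)
    (u : (Fin 3 → ℝ) → ℂ) (hu : ContDiff ℝ (⊤ : ℕ∞) u) (hne : ∀ x, u x ≠ 0)
    (heom : ∀ x, (1 + u x * conj (u x)) * dalembert u x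
        - ((j : ℂ) + 1) * conj (u x) * minkGrad u u x = 0)
    (hnull : ∀ x, minkGrad u (fun y => conj (u y)) x = 0)
    (n : ℤ) :
    IsConservedCurrent (fun μ x =>
      (u x) ^ n * pd μ (fun y => conj (u y)) x /
        (1 + u x * conj (u x)) ^ (j + 1)) := by
  simp only [dalembert, minkGrad] at heom hnull
  intro x
  beta_reduce
  have hud : ∀ y, DifferentiableAt ℝ u y := fun y => hu.differentiable (by simp) y
  rw [pd_J j u hu hne n 0 x, pd_J j u hu hne n 1 x, pd_J j u hu hne n 2 x]
  have H1 : pd 0 u x * conj (pd 0 u x) - pd 1 u x * conj (pd 1 u x)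
      - pd 2 u x * conj (pd 2 u x) = 0 := by
    have h := hnull x
    rw [pd_conj (hud x), pd_conj (hud x), pd_conj (hud x)] at h
    exact h
  have H2 := congrArg (starRingEnd ℂ) (heom x)
  simp only [map_sub, map_add, map_mul, map_one, map_zero, Complex.conj_conj, map_natCast] at H2
  set a := u x with ha
  set c := conj a with hc
  set p0 := pd 0 u x; set p1 := pd 1 u x; set p2 := pd 2 u x
  set q0 := pd 0 (pd 0 u) x; set q1 := pd 1 (pd 1 u) x; set q2 := pd 2 (pd 2 u) x
  set c0 := conj p0; set c1 := conj p1; set c2 := conj p2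
  set Q0 := conj q0; set Q1 := conj q1; set Q2 := conj q2
  have haz : a ≠ 0 := hne x
  rw [zpow_sub_one₀ (hne x) n]
  set A := a ^ n with hA
  have hhne : (1:ℂ) + a * c ≠ 0 := one_add_mul_conj_ne a
  have hw : ((1:ℂ) + a * c) ^ j ≠ 0 := pow_ne_zero _ hhne
  rw [pow_succ]
  set h := (1:ℂ) + a * c with hh
  set w := h ^ j with hwdef
  rw [← ha]
  field_simp
  linear_combination (h * (n:ℂ) * A - ((j:ℂ)+1) * A * a * c) * H1
    + (a * A) * H2 + (a * A * (Q0 - Q1 - Q2)) * hh
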